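/- Assume p ∈ (1/2, 1). With the notation of the CEV scale data, the function ψ is three times differentiable on (0,1) and sup_{x∈(0,1)} ( x^{2p−1} |ψ'(x)| + x^{2p} |ψ''(x)| + x^{2p+1} |ψ'''(x)| ) < ∞. -/

import Mathlib

open MeasureTheory Set intervalIntegral

/-- The scale density `s(x) = exp(−(2μ/(σ²(2−2p))) x^{2−2p})` of the CEV diffusion. -/
noncomputable def sDen (μ σ p : ℝ) (x : ℝ) : ℝ :=
  Real.exp (-(2 * μ / (σ ^ 2 * (2 - 2 * p))) * x ^ (2 - 2 * p))

/-- The scale function `S(x) = ∫₀ˣ s(z) dz` of the CEV diffusion. -/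
noncomputable def Sfun (μ σ p : ℝ) (x : ℝ) : ℝ := ∫ z in (0 : ℝ)..x, sDen μ σ p z

/-- The speed density `m(y) = 1/(σ² y^{2p} s(y))` of the CEV diffusion. -/
noncomputable def mDen (μ σ p : ℝ) (y : ℝ) : ℝ := 1 / (σ ^ 2 * y ^ (2 * p) * sDen μ σ p y)

/-- `φ(x) = S(x)/S(1)`, the probability that the CEV diffusion started at `x` reaches
`1` before `0`. -/
noncomputable def phiFun (μ σ p : ℝ) (x : ℝ) : ℝ := Sfun μ σ p x / Sfun μ σ p 1

/-- `ψ(x) = 2 φ(x) ∫ₓ¹ (S(1) − S(y)) m(y) dy + 2 (1 − φ(x)) ∫₀ˣ S(y) m(y) dy`, the expectation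
of the exit time of the CEV diffusion from `(0,1)` started at `x`. -/
noncomputable def psiFun (μ σ p : ℝ) (x : ℝ) : ℝ :=
  2 * phiFun μ σ p x * (∫ y in x..(1 : ℝ), (Sfun μ σ p 1 - Sfun μ σ p y) * mDen μ σ p y)
    + 2 * (1 - phiFun μ σ p x) * (∫ y in (0 : ℝ)..x, Sfun μ σ p y * mDen μ σ p y)


/-!
Differentiating the Green-function form of `ψ`, the terms containing the speed density cancel and
`ψ' = 2 s F / S(1)` with `F(x) = ∫ₓ¹ (S(1) − S) m − ∫₀ˣ S m`, so that `F' = −S(1) m` and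
`s m = x^{−2p}/σ²`. On `(0,1)` the scale density is bounded above and below, so `S(y) = O(y)` and
`m(y) = O(y^{−2p})`; as `2p > 1` this gives `F(x) = O(x^{1−2p})`, while `s' = O(x^{1−2p})` and
`s'' = O(x^{−2p})`. Multiplying these power bounds, `ψ'`, `ψ''`, `ψ'''` are `O(x^{1−2p})`,
`O(x^{−2p})`, `O(x^{−2p−1})` on `(0,1)`.
-/

open Filter Asymptotics

section PowerWeights

variable {f g : ℝ → ℝ} {a b c : ℝ}

theorem isBigO_rpow_of_abs_le (C : ℝ) (h : ∀ x ∈ Ioo (0 : ℝ) 1, |f x| ≤ C * x ^ a) :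
    f =O[𝓟 (Ioo 0 1)] fun x => x ^ a :=
  IsBigO.of_bound C <| eventually_principal.2 fun x hx => by
    rw [Real.norm_eq_abs, Real.norm_of_nonneg (Real.rpow_nonneg hx.1.le a)]
    exact h x hx

theorem isBigO_rpow_of_le (h : a ≤ b) :
    (fun x : ℝ => x ^ b) =O[𝓟 (Ioo 0 1)] fun x => x ^ a :=
  isBigO_rpow_of_abs_le 1 fun x hx => by
    rw [one_mul, abs_of_nonneg (Real.rpow_nonneg hx.1.le b)]
    exact Real.rpow_le_rpow_of_exponent_ge hx.1 hx.2.le h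

theorem Asymptotics.IsBigO.mul_rpow (hf : f =O[𝓟 (Ioo 0 1)] fun x => x ^ a)
    (hg : g =O[𝓟 (Ioo 0 1)] fun x => x ^ b) (hc : c ≤ a + b) :
    (fun x => f x * g x) =O[𝓟 (Ioo 0 1)] fun x => x ^ c :=
  (hf.mul hg).trans <| (isBigO_rpow_of_le hc).congr'
    (eventually_principal.2 fun _ hx => Real.rpow_add hx.1 a b) EventuallyEq.rfl

theorem Asymptotics.IsBigO.exists_rpow_mul_abs_le (h : f =O[𝓟 (Ioo 0 1)] fun x => x ^ (-a)) :
    ∃ C, ∀ x ∈ Ioo (0 : ℝ) 1, x ^ a * |f x| ≤ C := by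
  obtain ⟨C, hC⟩ := h.bound
  refine ⟨C, fun x hx => ?_⟩
  have hfx := eventually_principal.1 hC x hx
  rw [Real.norm_eq_abs, Real.norm_of_nonneg (Real.rpow_nonneg hx.1.le _)] at hfx
  have hxa : 0 < x ^ a := Real.rpow_pos_of_pos hx.1 a
  calc x ^ a * |f x| ≤ x ^ a * (C * x ^ (-a)) := mul_le_mul_of_nonneg_left hfx hxa.le
    _ = C := by rw [Real.rpow_neg hx.1.le]; field_simp

end PowerWeights

theorem integral_rpow_le_of_lt_neg_one {a x : ℝ} (ha : a < -1) (hx : 0 < x) :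
    ∫ y in x..1, y ^ a ≤ x ^ (a + 1) / -(a + 1) := by
  have h0 : (0 : ℝ) ∉ uIcc x 1 := fun h => (lt_min hx one_pos).not_ge h.1
  rw [integral_rpow (Or.inr ⟨ha.ne, h0⟩), Real.one_rpow, ← neg_div_neg_eq, neg_sub]
  exact div_le_div_of_nonneg_right (by linarith) (by linarith)

theorem hasDerivAt_deriv_of_forall_hasDerivAt {f g : ℝ → ℝ} {U : Set ℝ} {x g' : ℝ}
    (hU : IsOpen U) (hf : ∀ y ∈ U, HasDerivAt f (g y) y) (hx : x ∈ U) (hg : HasDerivAt g g' x) :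
    HasDerivAt (deriv f) g' x :=
  hg.congr_of_eventuallyEq <| eventually_of_mem (hU.mem_nhds hx) fun y hy => (hf y hy).deriv

-- The terms containing `m` cancel: only the derivative of the weight `S / S₁` survives.
theorem hasDerivAt_two_mul_div_mul_add {S A B : ℝ → ℝ} {s m S₁ x : ℝ} (hS₁ : S₁ ≠ 0)
    (hS : HasDerivAt S s x) (hA : HasDerivAt A (-((S₁ - S x) * m)) x)
    (hB : HasDerivAt B (S x * m) x) :
    HasDerivAt (fun y => 2 * (S y / S₁) * A y + 2 * (1 - S y / S₁) * B y)
      (2 / S₁ * (s * (A x - B x))) x := by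
  have h := (((hS.div_const S₁).const_mul 2).mul hA).add
    ((((hasDerivAt_const x 1).sub (hS.div_const S₁)).const_mul 2).mul hB)
  refine h.congr_deriv ?_
  simp only [Pi.sub_apply]
  field_simp
  ring

namespace CEV

variable {μ σ p x : ℝ}

/-- `e^{|k|}` bounds `s` and `1/s` on `[0,1]`, where `s(x) = e^{-k x^{2-2p}}`. -/
noncomputable def sBound (μ σ p : ℝ) : ℝ := Real.exp |2 * μ / (σ ^ 2 * (2 - 2 * p))|

lemma sBound_pos : 0 < sBound μ σ p := Real.exp_pos _

lemma sDen_pos (x : ℝ) : 0 < sDen μ σ p x := Real.exp_pos _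

lemma continuous_sDen (hp1 : p ≤ 1) : Continuous (sDen μ σ p) :=
  Real.continuous_exp.comp (continuous_const.mul (Real.continuous_rpow_const (by linarith)))

lemma abs_sDen_exponent_le (hp1 : p ≤ 1) (hx : x ∈ Icc (0 : ℝ) 1) :
    |-(2 * μ / (σ ^ 2 * (2 - 2 * p))) * x ^ (2 - 2 * p)| ≤ |2 * μ / (σ ^ 2 * (2 - 2 * p))| := by
  rw [abs_mul, abs_neg, abs_of_nonneg (Real.rpow_nonneg hx.1 _)]
  exact mul_le_of_le_one_right (abs_nonneg _) (Real.rpow_le_one hx.1 hx.2 (by linarith))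

lemma sDen_le_sBound (hp1 : p ≤ 1) (hx : x ∈ Icc (0 : ℝ) 1) : sDen μ σ p x ≤ sBound μ σ p :=
  Real.exp_le_exp.2 (le_of_abs_le (abs_sDen_exponent_le hp1 hx))

lemma sBound_inv_le_sDen (hp1 : p ≤ 1) (hx : x ∈ Icc (0 : ℝ) 1) :
    (sBound μ σ p)⁻¹ ≤ sDen μ σ p x := by
  rw [sBound, ← Real.exp_neg]
  exact Real.exp_le_exp.2 (neg_le_of_abs_le (abs_sDen_exponent_le hp1 hx))

lemma hasDerivAt_Sfun (hp1 : p ≤ 1) (x : ℝ) : HasDerivAt (Sfun μ σ p) (sDen μ σ p x) x :=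
  ((continuous_sDen hp1).integral_hasStrictDerivAt 0 x).hasDerivAt

lemma continuous_Sfun (hp1 : p ≤ 1) : Continuous (Sfun μ σ p) :=
  continuous_iff_continuousAt.2 fun x => (hasDerivAt_Sfun hp1 x).continuousAt

lemma strictMono_Sfun (hp1 : p ≤ 1) : StrictMono (Sfun μ σ p) :=
  strictMono_of_hasDerivAt_pos (hasDerivAt_Sfun hp1) sDen_pos

lemma Sfun_zero : Sfun μ σ p 0 = 0 := intervalIntegral.integral_same

lemma Sfun_nonneg (hp1 : p ≤ 1) (hx : 0 ≤ x) : 0 ≤ Sfun μ σ p x :=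
  Sfun_zero.symm.trans_le ((strictMono_Sfun hp1).monotone hx)

lemma Sfun_one_pos (hp1 : p ≤ 1) : 0 < Sfun μ σ p 1 :=
  Sfun_zero.symm.trans_lt (strictMono_Sfun hp1 one_pos)

lemma Sfun_le (hp1 : p ≤ 1) (hx : x ∈ Icc (0 : ℝ) 1) : Sfun μ σ p x ≤ sBound μ σ p * x := by
  have h : Sfun μ σ p x ≤ ∫ _ in (0 : ℝ)..x, sBound μ σ p :=
    integral_mono_on hx.1 ((continuous_sDen hp1).intervalIntegrable 0 x) intervalIntegrable_const
      fun y hy => sDen_le_sBound hp1 ⟨hy.1, hy.2.trans hx.2⟩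
  simpa [mul_comm] using h

lemma mDen_nonneg (hx : 0 ≤ x) : 0 ≤ mDen μ σ p x :=
  one_div_nonneg.2 (by have := sDen_pos (μ := μ) (σ := σ) (p := p) x; positivity)

lemma mDen_le (hσ : σ ≠ 0) (hp1 : p ≤ 1) (hx : x ∈ Ioc (0 : ℝ) 1) :
    mDen μ σ p x ≤ sBound μ σ p / σ ^ 2 * x ^ (-(2 * p)) := by
  have hs := sBound_inv_le_sDen (μ := μ) (σ := σ) hp1 ⟨hx.1.le, hx.2⟩
  have hxp : 0 < x ^ (2 * p) := Real.rpow_pos_of_pos hx.1 _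
  have hB : 0 < sBound μ σ p := sBound_pos
  calc mDen μ σ p x ≤ 1 / (σ ^ 2 * x ^ (2 * p) * (sBound μ σ p)⁻¹) :=
        one_div_le_one_div_of_le (by positivity) (mul_le_mul_of_nonneg_left hs (by positivity))
    _ = sBound μ σ p / σ ^ 2 * x ^ (-(2 * p)) := by
        rw [Real.rpow_neg hx.1.le]; field_simp

lemma continuousOn_mDen (hσ : σ ≠ 0) (hp1 : p ≤ 1) : ContinuousOn (mDen μ σ p) (Ioi 0) :=
  continuousOn_const.div
    ((continuousOn_const.mul (continuousOn_id.rpow_const fun y hy => Or.inl (ne_of_gt hy))).mul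
      (continuous_sDen hp1).continuousOn)
    fun y hy => by
      have := Real.rpow_pos_of_pos (show (0 : ℝ) < y from hy) (2 * p)
      have := sDen_pos (μ := μ) (σ := σ) (p := p) y
      positivity

lemma sDen_mul_mDen (hx : 0 < x) :
    sDen μ σ p x * mDen μ σ p x = x ^ (-(2 * p)) / σ ^ 2 := by
  have := sDen_pos (μ := μ) (σ := σ) (p := p) x
  have := Real.rpow_pos_of_pos hx (2 * p)
  rw [mDen, Real.rpow_neg hx.le]
  field_simp

noncomputable def Ffun (μ σ p x : ℝ) : ℝ :=
  (∫ y in x..1, (Sfun μ σ p 1 - Sfun μ σ p y) * mDen μ σ p y)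
    - ∫ y in (0 : ℝ)..x, Sfun μ σ p y * mDen μ σ p y

lemma continuousOn_Sfun_mul_mDen (hσ : σ ≠ 0) (hp1 : p ≤ 1) :
    ContinuousOn (fun y => Sfun μ σ p y * mDen μ σ p y) (Ioi 0) :=
  (continuous_Sfun hp1).continuousOn.mul (continuousOn_mDen hσ hp1)

lemma continuousOn_sub_Sfun_mul_mDen (hσ : σ ≠ 0) (hp1 : p ≤ 1) :
    ContinuousOn (fun y => (Sfun μ σ p 1 - Sfun μ σ p y) * mDen μ σ p y) (Ioi 0) :=
  (continuousOn_const.sub (continuous_Sfun hp1).continuousOn).mul (continuousOn_mDen hσ hp1)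

lemma abs_Sfun_mul_mDen_le (hσ : σ ≠ 0) (hp1 : p ≤ 1) (hx : x ∈ Ioc (0 : ℝ) 1) :
    |Sfun μ σ p x * mDen μ σ p x| ≤ sBound μ σ p ^ 2 / σ ^ 2 * x ^ (1 - 2 * p) := by
  have hS := Sfun_le (μ := μ) (σ := σ) hp1 ⟨hx.1.le, hx.2⟩
  have hm := mDen_le (μ := μ) hσ hp1 hx
  have hm0 : 0 ≤ mDen μ σ p x := mDen_nonneg hx.1.le
  rw [abs_of_nonneg (mul_nonneg (Sfun_nonneg hp1 hx.1.le) hm0)]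
  calc Sfun μ σ p x * mDen μ σ p x
      ≤ sBound μ σ p * x * (sBound μ σ p / σ ^ 2 * x ^ (-(2 * p))) :=
        mul_le_mul hS hm hm0 (mul_nonneg sBound_pos.le hx.1.le)
    _ = sBound μ σ p ^ 2 / σ ^ 2 * (x ^ (1 : ℝ) * x ^ (-(2 * p))) := by rw [Real.rpow_one]; ring
    _ = sBound μ σ p ^ 2 / σ ^ 2 * x ^ (1 - 2 * p) := by
        rw [← Real.rpow_add hx.1, ← sub_eq_add_neg]

lemma abs_sub_Sfun_mul_mDen_le (hσ : σ ≠ 0) (hp1 : p ≤ 1) (hx : x ∈ Ioc (0 : ℝ) 1) :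
    |(Sfun μ σ p 1 - Sfun μ σ p x) * mDen μ σ p x|
      ≤ Sfun μ σ p 1 * (sBound μ σ p / σ ^ 2) * x ^ (-(2 * p)) := by
  have hS0 := Sfun_nonneg (μ := μ) (σ := σ) hp1 hx.1.le
  have hS1 := (strictMono_Sfun (μ := μ) (σ := σ) hp1).monotone hx.2
  have hm0 : 0 ≤ mDen μ σ p x := mDen_nonneg hx.1.le
  rw [abs_of_nonneg (mul_nonneg (by linarith) hm0), mul_assoc]
  exact mul_le_mul (by linarith) (mDen_le hσ hp1 hx) hm0 (Sfun_one_pos hp1).le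

lemma intervalIntegrable_Sfun_mul_mDen (hσ : σ ≠ 0) (hp1 : p < 1) (hx : x ∈ Ioc (0 : ℝ) 1) :
    IntervalIntegrable (fun y => Sfun μ σ p y * mDen μ σ p y) volume 0 x := by
  refine ((intervalIntegrable_rpow' (r := 1 - 2 * p) (by linarith)).const_mul
    (sBound μ σ p ^ 2 / σ ^ 2)).mono_fun' ?_ ?_
  · exact ((continuousOn_Sfun_mul_mDen hσ hp1.le).mono (by simp [uIoc_of_le hx.1.le,
      Ioc_subset_Ioi_self])).aestronglyMeasurable measurableSet_uIoc
  · refine (ae_restrict_mem measurableSet_uIoc).mono fun y hy => ?_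
    rw [uIoc_of_le hx.1.le] at hy
    exact (Real.norm_eq_abs _).trans_le
      (abs_Sfun_mul_mDen_le hσ hp1.le ⟨hy.1, hy.2.trans hx.2⟩)

lemma hasDerivAt_integral_sub_Sfun_mul_mDen (hσ : σ ≠ 0) (hp1 : p ≤ 1) (hx : 0 < x) :
    HasDerivAt (fun u => ∫ y in u..1, (Sfun μ σ p 1 - Sfun μ σ p y) * mDen μ σ p y)
      (-((Sfun μ σ p 1 - Sfun μ σ p x) * mDen μ σ p x)) x := by
  have hcont := continuousOn_sub_Sfun_mul_mDen (μ := μ) hσ hp1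
  refine integral_hasDerivAt_left ((hcont.mono fun y hy => ?_).intervalIntegrable)
    (hcont.stronglyMeasurableAtFilter isOpen_Ioi x hx) (hcont.continuousAt (Ioi_mem_nhds hx))
  exact (lt_min hx one_pos).trans_le hy.1

lemma hasDerivAt_integral_Sfun_mul_mDen (hσ : σ ≠ 0) (hp1 : p < 1) (hx : x ∈ Ioo (0 : ℝ) 1) :
    HasDerivAt (fun u => ∫ y in (0 : ℝ)..u, Sfun μ σ p y * mDen μ σ p y)
      (Sfun μ σ p x * mDen μ σ p x) x :=
  have hcont := continuousOn_Sfun_mul_mDen (μ := μ) hσ hp1.le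
  integral_hasDerivAt_right (intervalIntegrable_Sfun_mul_mDen hσ hp1 ⟨hx.1, hx.2.le⟩)
    (hcont.stronglyMeasurableAtFilter isOpen_Ioi x hx.1) (hcont.continuousAt (Ioi_mem_nhds hx.1))

lemma hasDerivAt_Ffun (hσ : σ ≠ 0) (hp1 : p < 1) (hx : x ∈ Ioo (0 : ℝ) 1) :
    HasDerivAt (Ffun μ σ p) (-Sfun μ σ p 1 * mDen μ σ p x) x :=
  ((hasDerivAt_integral_sub_Sfun_mul_mDen hσ hp1.le hx.1).sub
    (hasDerivAt_integral_Sfun_mul_mDen hσ hp1 hx)).congr_deriv (by ring)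

lemma isBigO_integral_sub_Sfun_mul_mDen (hσ : σ ≠ 0) (hp : 1 / 2 < p) (hp1 : p < 1) :
    (fun x => ∫ y in x..1, (Sfun μ σ p 1 - Sfun μ σ p y) * mDen μ σ p y)
      =O[𝓟 (Ioo 0 1)] fun x => x ^ (1 - 2 * p) := by
  set c := Sfun μ σ p 1 * (sBound μ σ p / σ ^ 2)
  have hc : 0 ≤ c :=
    mul_nonneg (Sfun_one_pos hp1.le).le (div_nonneg sBound_pos.le (sq_nonneg σ))
  refine isBigO_rpow_of_abs_le (c / (2 * p - 1)) fun x hx => ?_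
  have h0 : (0 : ℝ) ∉ uIcc x 1 := fun h => (lt_min hx.1 one_pos).not_ge h.1
  calc |∫ y in x..1, (Sfun μ σ p 1 - Sfun μ σ p y) * mDen μ σ p y|
      ≤ ∫ y in x..1, c * y ^ (-(2 * p)) :=
        norm_integral_le_of_norm_le hx.2.le (ae_of_all _ fun y hy =>
          (Real.norm_eq_abs _).trans_le (abs_sub_Sfun_mul_mDen_le hσ hp1.le
            ⟨hx.1.trans hy.1, hy.2⟩)) ((intervalIntegrable_rpow (Or.inr h0)).const_mul c)
    _ ≤ c * (x ^ (-(2 * p) + 1) / -(-(2 * p) + 1)) := by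
        rw [intervalIntegral.integral_const_mul]
        exact mul_le_mul_of_nonneg_left (integral_rpow_le_of_lt_neg_one (by linarith) hx.1) hc
    _ = c / (2 * p - 1) * x ^ (1 - 2 * p) := by
        rw [show -(2 * p) + 1 = 1 - 2 * p by ring, show -(1 - 2 * p) = 2 * p - 1 by ring]; ring

lemma isBigO_integral_Sfun_mul_mDen (hσ : σ ≠ 0) (hp1 : p < 1) :
    (fun x => ∫ y in (0 : ℝ)..x, Sfun μ σ p y * mDen μ σ p y)
      =O[𝓟 (Ioo 0 1)] fun x => x ^ (2 - 2 * p) := by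
  set c := sBound μ σ p ^ 2 / σ ^ 2
  refine isBigO_rpow_of_abs_le (c / (2 - 2 * p)) fun x hx => ?_
  calc |∫ y in (0 : ℝ)..x, Sfun μ σ p y * mDen μ σ p y|
      ≤ ∫ y in (0 : ℝ)..x, c * y ^ (1 - 2 * p) :=
        norm_integral_le_of_norm_le hx.1.le (ae_of_all _ fun y hy =>
          (Real.norm_eq_abs _).trans_le (abs_Sfun_mul_mDen_le hσ hp1.le
            ⟨hy.1, hy.2.trans hx.2.le⟩))
          ((intervalIntegrable_rpow' (by linarith)).const_mul c)
    _ = c / (2 - 2 * p) * x ^ (2 - 2 * p) := by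
        rw [intervalIntegral.integral_const_mul, integral_rpow (Or.inl (by linarith)),
          show 1 - 2 * p + 1 = 2 - 2 * p by ring, Real.zero_rpow (by linarith)]
        ring

lemma isBigO_Ffun (hσ : σ ≠ 0) (hp : 1 / 2 < p) (hp1 : p < 1) :
    Ffun μ σ p =O[𝓟 (Ioo 0 1)] fun x => x ^ (1 - 2 * p) :=
  (isBigO_integral_sub_Sfun_mul_mDen hσ hp hp1).sub
    ((isBigO_integral_Sfun_mul_mDen hσ hp1).trans (isBigO_rpow_of_le (by linarith)))

noncomputable def sDenDeriv (μ σ p x : ℝ) : ℝ :=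
  -(2 * μ / σ ^ 2) * x ^ (1 - 2 * p) * sDen μ σ p x

noncomputable def sDenDeriv2 (μ σ p x : ℝ) : ℝ :=
  -(2 * μ / σ ^ 2) *
    ((1 - 2 * p) * x ^ (-(2 * p)) * sDen μ σ p x + x ^ (1 - 2 * p) * sDenDeriv μ σ p x)

noncomputable def psiDeriv1 (μ σ p x : ℝ) : ℝ :=
  2 / Sfun μ σ p 1 * (sDen μ σ p x * Ffun μ σ p x)

noncomputable def psiDeriv2 (μ σ p x : ℝ) : ℝ :=
  2 / Sfun μ σ p 1 * (sDenDeriv μ σ p x * Ffun μ σ p x) - 2 / σ ^ 2 * x ^ (-(2 * p))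

noncomputable def psiDeriv3 (μ σ p x : ℝ) : ℝ :=
  2 / Sfun μ σ p 1 *
      (sDenDeriv2 μ σ p x * Ffun μ σ p x + sDenDeriv μ σ p x * (-Sfun μ σ p 1 * mDen μ σ p x))
    - 2 / σ ^ 2 * (-(2 * p) * x ^ (-(2 * p) - 1))

lemma hasDerivAt_sDen (hσ : σ ≠ 0) (hp1 : p ≠ 1) (hx : 0 < x) :
    HasDerivAt (sDen μ σ p) (sDenDeriv μ σ p x) x := by
  have h := ((Real.hasDerivAt_rpow_const (p := 2 - 2 * p) (Or.inl hx.ne')).const_mul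
    (-(2 * μ / (σ ^ 2 * (2 - 2 * p))))).exp
  refine h.congr_deriv ?_
  have : (2 - 2 * p : ℝ) ≠ 0 := fun h => hp1 (by linarith)
  rw [sDenDeriv, sDen, show 2 - 2 * p - 1 = 1 - 2 * p by ring]
  field_simp

lemma hasDerivAt_sDenDeriv (hσ : σ ≠ 0) (hp1 : p ≠ 1) (hx : 0 < x) :
    HasDerivAt (sDenDeriv μ σ p) (sDenDeriv2 μ σ p x) x := by
  have h := ((Real.hasDerivAt_rpow_const (p := 1 - 2 * p) (Or.inl hx.ne')).const_mul
    (-(2 * μ / σ ^ 2))).mul (hasDerivAt_sDen (μ := μ) hσ hp1 hx)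
  refine h.congr_deriv ?_
  rw [sDenDeriv2, show 1 - 2 * p - 1 = -(2 * p) by ring]
  ring

lemma hasDerivAt_psiFun (hσ : σ ≠ 0) (hp1 : p < 1) (hx : x ∈ Ioo (0 : ℝ) 1) :
    HasDerivAt (psiFun μ σ p) (psiDeriv1 μ σ p x) x :=
  hasDerivAt_two_mul_div_mul_add (Sfun_one_pos hp1.le).ne' (hasDerivAt_Sfun hp1.le x)
    (hasDerivAt_integral_sub_Sfun_mul_mDen hσ hp1.le hx.1)
    (hasDerivAt_integral_Sfun_mul_mDen hσ hp1 hx)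

lemma hasDerivAt_psiDeriv1 (hσ : σ ≠ 0) (hp1 : p < 1) (hx : x ∈ Ioo (0 : ℝ) 1) :
    HasDerivAt (psiDeriv1 μ σ p) (psiDeriv2 μ σ p x) x := by
  have h := ((hasDerivAt_sDen (μ := μ) hσ hp1.ne hx.1).mul
    (hasDerivAt_Ffun (μ := μ) hσ hp1 hx)).const_mul (2 / Sfun μ σ p 1)
  refine h.congr_deriv ?_
  have := (Sfun_one_pos (μ := μ) (σ := σ) hp1.le).ne'
  rw [psiDeriv2]
  linear_combination (norm := (field_simp; ring))
    (-2) * sDen_mul_mDen (μ := μ) (σ := σ) (p := p) hx.1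

lemma hasDerivAt_psiDeriv2 (hσ : σ ≠ 0) (hp1 : p < 1) (hx : x ∈ Ioo (0 : ℝ) 1) :
    HasDerivAt (psiDeriv2 μ σ p) (psiDeriv3 μ σ p x) x :=
  (((hasDerivAt_sDenDeriv hσ hp1.ne hx.1).mul (hasDerivAt_Ffun hσ hp1 hx)).const_mul _).sub
    ((Real.hasDerivAt_rpow_const (Or.inl hx.1.ne')).const_mul _)

lemma isBigO_sDen (hp1 : p ≤ 1) : sDen μ σ p =O[𝓟 (Ioo 0 1)] fun x => x ^ (0 : ℝ) :=
  isBigO_rpow_of_abs_le (sBound μ σ p) fun x hx => by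
    rw [Real.rpow_zero, mul_one, abs_of_pos (sDen_pos x)]
    exact sDen_le_sBound hp1 ⟨hx.1.le, hx.2.le⟩

lemma isBigO_mDen (hσ : σ ≠ 0) (hp1 : p ≤ 1) :
    mDen μ σ p =O[𝓟 (Ioo 0 1)] fun x => x ^ (-(2 * p)) :=
  isBigO_rpow_of_abs_le (sBound μ σ p / σ ^ 2) fun x hx => by
    rw [abs_of_nonneg (mDen_nonneg hx.1.le)]
    exact mDen_le hσ hp1 ⟨hx.1, hx.2.le⟩

lemma isBigO_sDenDeriv (hp1 : p ≤ 1) :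
    sDenDeriv μ σ p =O[𝓟 (Ioo 0 1)] fun x => x ^ (1 - 2 * p) :=
  ((isBigO_refl _ _).const_mul_left _).mul_rpow (isBigO_sDen hp1) (by linarith)

lemma isBigO_sDenDeriv2 (hp1 : p ≤ 1) :
    sDenDeriv2 μ σ p =O[𝓟 (Ioo 0 1)] fun x => x ^ (-(2 * p)) :=
  ((((isBigO_refl _ _).const_mul_left _).mul_rpow (isBigO_sDen hp1) (by linarith)).add
    ((isBigO_refl _ _).mul_rpow (isBigO_sDenDeriv hp1) (by linarith))).const_mul_left _

lemma isBigO_psiDeriv1 (hσ : σ ≠ 0) (hp : 1 / 2 < p) (hp1 : p < 1) :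
    psiDeriv1 μ σ p =O[𝓟 (Ioo 0 1)] fun x => x ^ (-(2 * p - 1)) :=
  ((isBigO_sDen hp1.le).mul_rpow (isBigO_Ffun hσ hp hp1) (by linarith)).const_mul_left _

lemma isBigO_psiDeriv2 (hσ : σ ≠ 0) (hp : 1 / 2 < p) (hp1 : p < 1) :
    psiDeriv2 μ σ p =O[𝓟 (Ioo 0 1)] fun x => x ^ (-(2 * p)) :=
  (((isBigO_sDenDeriv hp1.le).mul_rpow (isBigO_Ffun hσ hp hp1) (by linarith)).const_mul_left
    _).sub ((isBigO_refl _ _).const_mul_left _)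

lemma isBigO_psiDeriv3 (hσ : σ ≠ 0) (hp : 1 / 2 < p) (hp1 : p < 1) :
    psiDeriv3 μ σ p =O[𝓟 (Ioo 0 1)] fun x => x ^ (-(2 * p + 1)) :=
  ((((isBigO_sDenDeriv2 hp1.le).mul_rpow (isBigO_Ffun hσ hp hp1) (by linarith)).add
    ((isBigO_sDenDeriv hp1.le).mul_rpow ((isBigO_mDen hσ hp1.le).const_mul_left _)
      (by linarith))).const_mul_left _).sub
    (((isBigO_rpow_of_le (by linarith)).const_mul_left _).const_mul_left _)

end CEV

open CEV in
/-- Lemma A.2 (case `p ∈ (1/2,1)`): `ψ` is three times differentiable on `(0,1)` and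
`sup_{x∈(0,1)} (x^{2p−1}|ψ'(x)| + x^{2p}|ψ''(x)| + x^{2p+1}|ψ'''(x)|) < ∞`. -/
theorem stmt10 (μ σ p : ℝ) (hσ : 0 < σ) (hp : 1 / 2 < p) (hp1 : p < 1) :
    (∀ x ∈ Ioo (0 : ℝ) 1,
      DifferentiableAt ℝ (psiFun μ σ p) x ∧
      DifferentiableAt ℝ (deriv (psiFun μ σ p)) x ∧
      DifferentiableAt ℝ (deriv (deriv (psiFun μ σ p))) x) ∧
    ∃ C : ℝ, ∀ x ∈ Ioo (0 : ℝ) 1,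
      x ^ (2 * p - 1) * |deriv (psiFun μ σ p) x|
        + x ^ (2 * p) * |deriv (deriv (psiFun μ σ p)) x|
        + x ^ (2 * p + 1) * |deriv (deriv (deriv (psiFun μ σ p))) x| ≤ C := by
  have h1 : ∀ x ∈ Ioo (0 : ℝ) 1, HasDerivAt (psiFun μ σ p) (psiDeriv1 μ σ p x) x :=
    fun x hx => hasDerivAt_psiFun hσ.ne' hp1 hx
  have h2 : ∀ x ∈ Ioo (0 : ℝ) 1, HasDerivAt (deriv (psiFun μ σ p)) (psiDeriv2 μ σ p x) x :=
    fun x hx => hasDerivAt_deriv_of_forall_hasDerivAt isOpen_Ioo h1 hx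
      (hasDerivAt_psiDeriv1 hσ.ne' hp1 hx)
  have h3 : ∀ x ∈ Ioo (0 : ℝ) 1,
      HasDerivAt (deriv (deriv (psiFun μ σ p))) (psiDeriv3 μ σ p x) x :=
    fun x hx => hasDerivAt_deriv_of_forall_hasDerivAt isOpen_Ioo h2 hx
      (hasDerivAt_psiDeriv2 hσ.ne' hp1 hx)
  refine ⟨fun x hx => ⟨(h1 x hx).differentiableAt, (h2 x hx).differentiableAt,
    (h3 x hx).differentiableAt⟩, ?_⟩
  obtain ⟨C₁, hC₁⟩ := (isBigO_psiDeriv1 hσ.ne' hp hp1).exists_rpow_mul_abs_le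
  obtain ⟨C₂, hC₂⟩ := (isBigO_psiDeriv2 hσ.ne' hp hp1).exists_rpow_mul_abs_le
  obtain ⟨C₃, hC₃⟩ := (isBigO_psiDeriv3 hσ.ne' hp hp1).exists_rpow_mul_abs_le
  refine ⟨C₁ + C₂ + C₃, fun x hx => ?_⟩
  rw [(h1 x hx).deriv, (h2 x hx).deriv, (h3 x hx).deriv]
  linarith [hC₁ x hx, hC₂ x hx, hC₃ x hx]
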